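/- arXiv:1305.1245 — 3 statements merged into one kernel-verified Lean document; each statement's English description precedes it below -/
import Mathlib

section
/- If γ has Conley-Zehnder index iteration of the form μ(γ^k) = k·r + Σ_{i=1}^{j} 2⌊kθ_i⌋ + j with r an integer, j ∈ {0,…,n-1}, θ_i ∈ (0,1) irrational, and μ(γ^1) = r + j ≥ n - 1, then r ≥ 0 and consequently the index is nondecreasing under iteration: μ(γ^k) ≤ μ(γ^{k+1}) for all k ∈ ℕ. -/
theorem monotone_sum_floor_mul {ι : Type*} [Fintype ι] {θ : ι → ℝ} (hθ : ∀ i, 0 ≤ θ i) :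
    Monotone fun x : ℝ => ∑ i, ⌊x * θ i⌋ := fun _ _ hxy =>
  Finset.sum_le_sum fun i _ => Int.floor_le_floor (mul_le_mul_of_nonneg_right hxy (hθ i))

theorem stmt_0_general (n : ℕ) (r : ℤ) (j : ℕ) (hj : (j : ℤ) ≤ (n : ℤ) - 1)
    (θ : Fin j → ℝ)
    (hθ : ∀ i, 0 < θ i ∧ θ i < 1)
    (μ : ℕ → ℤ)
    (hμ : ∀ k : ℕ, μ k = (k : ℤ) * r + (∑ i, 2 * ⌊(k : ℝ) * θ i⌋) + (j : ℤ))
    (h1 : (n : ℤ) - 1 ≤ r + (j : ℤ)) :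
    0 ≤ r ∧ ∀ k : ℕ, 1 ≤ k → μ k ≤ μ (k + 1) := by
  have hr : 0 ≤ r := by omega
  refine ⟨hr, fun k _ => ?_⟩
  have hfloor := monotone_sum_floor_mul (fun i => (hθ i).1.le)
    (Nat.cast_le.mpr (Nat.le_add_right k 1))
  simp only [hμ, ← Finset.mul_sum]
  push_cast at hfloor ⊢
  linarith

theorem stmt_0 (n : ℕ) (hn : 1 ≤ n) (r : ℤ) (j : ℕ) (hj : (j : ℤ) ≤ (n : ℤ) - 1)
    (θ : Fin j → ℝ) (hirr : ∀ i, Irrational (θ i))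
    (hθ : ∀ i, 0 < θ i ∧ θ i < 1)
    (μ : ℕ → ℤ)
    (hμ : ∀ k : ℕ, μ k = (k : ℤ) * r + (∑ i, 2 * ⌊(k : ℝ) * θ i⌋) + (j : ℤ))
    (h1 : (n : ℤ) - 1 ≤ r + (j : ℤ)) :
    0 ≤ r ∧ ∀ k : ℕ, 1 ≤ k → μ k ≤ μ (k + 1) :=
  stmt_0_general n r j hj θ hθ μ hμ h1
end

section
/- If μ(k) = k·r + Σ_{i=1}^{j} 2⌊kθ_i⌋ + j with 1 ≤ j ≤ n-1, θ_i ∈ (0,1) irrational, and μ(1) = r + j = n + 1, then μ(k) + 2 ≤ μ(k+1) for all k ∈ ℕ, and moreover there exists k₀ ∈ ℕ with μ(k₀) + 2 < μ(k₀+1). -/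
/-! The increment `μ (k + 1) - μ k` equals `r + 2 ∑ᵢ (⌊(k + 1) θᵢ⌋ - ⌊k θᵢ⌋)`. Each floor is
nondecreasing in `k`, and `r = n + 1 - j ≥ 2`, which gives `μ k + 2 ≤ μ (k + 1)`. Since
`⌊k θ₁⌋ → ∞`, the floor of `k θ₁` must jump at some `k₀ ≥ 1`, and there the increment is at
least `r + 2 ≥ 4`. -/

lemma monotone_floor_natCast_mul {θ : ℝ} (hθ : 0 ≤ θ) : Monotone fun k : ℕ => ⌊(k : ℝ) * θ⌋ :=
  fun _ _ hab => Int.floor_le_floor (by gcongr)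

lemma exists_floor_natCast_mul_lt_succ {θ : ℝ} (hθ : 0 < θ) :
    ∃ k : ℕ, 1 ≤ k ∧ ⌊(k : ℝ) * θ⌋ < ⌊((k + 1 : ℕ) : ℝ) * θ⌋ := by
  by_contra! hconst
  have hanti : Antitone fun k : ℕ => ⌊((k + 1 : ℕ) : ℝ) * θ⌋ :=
    antitone_nat_of_succ_le fun k => hconst (k + 1) (by omega)
  obtain ⟨N, hN⟩ := exists_nat_gt θ⁻¹
  have hNθ : 1 < (N : ℝ) * θ := by rwa [inv_lt_iff_one_lt_mul₀ hθ] at hN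
  have hjump : ⌊((0 + 1 : ℕ) : ℝ) * θ⌋ < ⌊((N + 1 : ℕ) : ℝ) * θ⌋ := by
    rw [Int.lt_iff_add_one_le, Int.le_floor]
    push_cast
    rw [one_mul]
    linarith [Int.floor_le θ]
  exact (hanti (Nat.zero_le N)).not_gt hjump

section FloorSum

variable {ι : Type*} [Fintype ι] {θ : ι → ℝ}

lemma sum_floor_natCast_mul_le_succ (hθ : ∀ i, 0 ≤ θ i) (k : ℕ) :
    ∑ i, ⌊(k : ℝ) * θ i⌋ ≤ ∑ i, ⌊((k + 1 : ℕ) : ℝ) * θ i⌋ :=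
  Finset.sum_le_sum fun i _ => monotone_floor_natCast_mul (hθ i) k.le_succ

lemma sum_floor_natCast_mul_lt_succ (hθ : ∀ i, 0 ≤ θ i) {k : ℕ} {i₀ : ι}
    (hi₀ : ⌊(k : ℝ) * θ i₀⌋ < ⌊((k + 1 : ℕ) : ℝ) * θ i₀⌋) :
    ∑ i, ⌊(k : ℝ) * θ i⌋ < ∑ i, ⌊((k + 1 : ℕ) : ℝ) * θ i⌋ :=
  Finset.sum_lt_sum (fun i _ => monotone_floor_natCast_mul (hθ i) k.le_succ)
    ⟨i₀, Finset.mem_univ _, hi₀⟩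

end FloorSum

theorem stmt_1_general (n : ℕ) (r : ℤ) (j : ℕ) (hj1 : 1 ≤ j)
    (hj : (j : ℤ) ≤ (n : ℤ) - 1)
    (θ : Fin j → ℝ)
    (hθ : ∀ i, 0 < θ i ∧ θ i < 1)
    (μ : ℕ → ℤ)
    (hμ : ∀ k : ℕ, μ k = (k : ℤ) * r + (∑ i, 2 * ⌊(k : ℝ) * θ i⌋) + (j : ℤ))
    (h1 : r + (j : ℤ) = (n : ℤ) + 1) :
    (∀ k : ℕ, 1 ≤ k → μ k + 2 ≤ μ (k + 1)) ∧
      ∃ k₀ : ℕ, 1 ≤ k₀ ∧ μ k₀ + 2 < μ (k₀ + 1) := by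
  have hr : 2 ≤ r := by omega
  have hθ₀ : ∀ i, 0 ≤ θ i := fun i => (hθ i).1.le
  have hincr : ∀ k : ℕ, μ (k + 1) - μ k =
      r + 2 * (∑ i, ⌊((k + 1 : ℕ) : ℝ) * θ i⌋ - ∑ i, ⌊(k : ℝ) * θ i⌋) := by
    intro k
    rw [hμ, hμ, ← Finset.mul_sum, ← Finset.mul_sum]
    push_cast
    ring
  refine ⟨fun k _ => ?_, ?_⟩
  · linarith [hincr k, sum_floor_natCast_mul_le_succ hθ₀ k]
  · obtain ⟨k₀, hk₀, hjump⟩ := exists_floor_natCast_mul_lt_succ (hθ ⟨0, hj1⟩).1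
    exact ⟨k₀, hk₀, by linarith [hincr k₀, sum_floor_natCast_mul_lt_succ hθ₀ hjump]⟩

theorem stmt_1 (n : ℕ) (hn : 2 ≤ n) (r : ℤ) (j : ℕ) (hj1 : 1 ≤ j)
    (hj : (j : ℤ) ≤ (n : ℤ) - 1)
    (θ : Fin j → ℝ) (hirr : ∀ i, Irrational (θ i))
    (hθ : ∀ i, 0 < θ i ∧ θ i < 1)
    (μ : ℕ → ℤ)
    (hμ : ∀ k : ℕ, μ k = (k : ℤ) * r + (∑ i, 2 * ⌊(k : ℝ) * θ i⌋) + (j : ℤ))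
    (h1 : r + (j : ℤ) = (n : ℤ) + 1) :
    (∀ k : ℕ, 1 ≤ k → μ k + 2 ≤ μ (k + 1)) ∧
      ∃ k₀ : ℕ, 1 ≤ k₀ ∧ μ k₀ + 2 < μ (k₀ + 1) :=
  stmt_1_general n r j hj1 hj θ hθ μ hμ h1
end

section
/- Let θ₁,…,θ_{n-1} ∈ (0,1) be irrational and set μ(k) = Σ_{i=1}^{n-1} 2⌊kθ_i⌋ + n - 1. Let β be a positive integer. It is impossible that μ(βi + 1) = μ(βi + 2) for all i ∈ ℕ. In particular, there exists i* such that Σ_{i=1}^{n-1} ⌊(βi*+2)θ_i⌋ ≥ Σ_{i=1}^{n-1} ⌊(βi*+1)θ_i⌋ + 1. -/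
/-!
By Dirichlet's approximation theorem some positive multiple `kα` of an irrational `α` lies within
`δ` of an integer without being one, so stepping from `x` by `kα` moves by less than `δ` modulo 1,
always in the same direction; after some positive number of steps the fractional part exceeds
`1 - δ`. With `α = βθ₀`, `x = θ₀`, `δ = θ₀` this gives `i ≥ 1` with
`⌊(βi + 1)θ₀⌋ < ⌊(βi + 1)θ₀ + θ₀⌋`, while `⌊(βi + 1)θ_t⌋ ≤ ⌊(βi + 2)θ_t⌋` for every `t` as
`θ_t > 0`; so the floor sums, and hence the values of `μ`, differ.
-/

open Int

lemma exists_pos_nat_one_sub_abs_le_fract_add_mul {g : ℝ} (hg : g ≠ 0) (x : ℝ) :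
    ∃ N : ℕ, 0 < N ∧ 1 - |g| ≤ fract (x + N * g) := by
  suffices ∃ m : ℤ, 0 < m ∧ ∃ c : ℤ, c - |g| ≤ x + m * g ∧ x + m * g < c by
    obtain ⟨m, hm, c, hlow, hupp⟩ := this
    refine ⟨m.toNat, by omega, ?_⟩
    have hfloor : ⌊x + m * g⌋ ≤ c - 1 := by
      have := floor_lt.mpr hupp
      omega
    have hcast : ((m.toNat : ℕ) : ℝ) = m := by exact_mod_cast toNat_of_nonneg hm.le
    rw [hcast, fract]
    have : (⌊x + m * g⌋ : ℝ) ≤ c - 1 := by exact_mod_cast hfloor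
    linarith
  rcases hg.lt_or_gt with hneg | hpos
  · -- walking down from `x`, stop just below `⌊x⌋`
    obtain ⟨m, ⟨hlow, hupp⟩, -⟩ := existsUnique_sub_zsmul_mem_Ico (neg_pos.mpr hneg) x (⌊x⌋ + g)
    simp only [zsmul_eq_mul, mul_neg, sub_neg_eq_add, add_neg_cancel_right] at hlow hupp
    have hm : 0 < m := by
      have : (m : ℝ) * g < 0 := by linarith [floor_le x]
      exact_mod_cast pos_of_mul_neg_left this hneg.le
    exact ⟨m, hm, ⌊x⌋, by rw [abs_of_neg hneg]; linarith, hupp⟩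
  · -- walking up from `x`, stop just below `⌊x + g⌋ + 1`
    obtain ⟨m, ⟨hlow, hupp⟩, -⟩ := existsUnique_add_zsmul_mem_Ico hpos x (⌊x + g⌋ + 1 - g)
    simp only [zsmul_eq_mul, sub_add_cancel] at hlow hupp
    have hm : 0 < m := by
      have : 0 < (m : ℝ) * g := by linarith [lt_floor_add_one (x + g)]
      exact_mod_cast pos_of_mul_pos_left this hpos.le
    exact ⟨m, hm, ⌊x + g⌋ + 1, by push_cast; rw [abs_of_pos hpos]; linarith, by exact_mod_cast hupp⟩

lemma Irrational.exists_pos_nat_abs_mul_sub_round_lt {α : ℝ} (hα : Irrational α) {δ : ℝ}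
    (hδ : 0 < δ) : ∃ k : ℕ, 0 < k ∧ k * α - round (k * α) ≠ 0 ∧ |k * α - round (k * α)| < δ := by
  obtain ⟨n, hn⟩ := exists_nat_one_div_lt hδ
  obtain ⟨k, hk, -, hle⟩ := Real.exists_nat_abs_mul_sub_round_le α n.succ_pos
  refine ⟨k, hk, sub_ne_zero.mpr ((hα.natCast_mul hk.ne').ne_int _), hle.trans_lt ?_⟩
  calc 1 / ((n.succ : ℝ) + 1) ≤ 1 / ((n : ℝ) + 1) := by gcongr; simp
    _ < δ := hn

lemma Irrational.exists_pos_nat_one_sub_lt_fract_add_mul {α : ℝ} (hα : Irrational α) (x : ℝ)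
    {δ : ℝ} (hδ : 0 < δ) : ∃ J : ℕ, 0 < J ∧ 1 - δ < fract (x + J * α) := by
  obtain ⟨k, hk, hg, hgδ⟩ := hα.exists_pos_nat_abs_mul_sub_round_lt hδ
  obtain ⟨N, hN, hfract⟩ := exists_pos_nat_one_sub_abs_le_fract_add_mul hg x
  refine ⟨N * k, Nat.mul_pos hN hk, ?_⟩
  have hshift : x + ((N * k : ℕ) : ℝ) * α
      = x + N * (k * α - round (k * α)) + ((N * round (k * α) : ℤ) : ℝ) := by
    push_cast
    ring
  rw [hshift, fract_add_intCast]
  linarith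

lemma floor_lt_floor_add_of_one_sub_lt_fract {y δ : ℝ} (h : 1 - δ < fract y) :
    ⌊y⌋ < ⌊y + δ⌋ := by
  rw [← add_one_le_iff, le_floor]
  push_cast
  linarith [fract_add_floor y]

lemma Irrational.exists_floor_lt_floor_progression {θ : ℝ} (hθ : Irrational θ) (hθ0 : 0 < θ)
    {β : ℕ} (hβ : 1 ≤ β) :
    ∃ i : ℕ, 1 ≤ i ∧ ⌊((β * i + 1 : ℕ) : ℝ) * θ⌋ < ⌊((β * i + 2 : ℕ) : ℝ) * θ⌋ := by
  obtain ⟨i, hi, hfract⟩ :=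
    (hθ.natCast_mul (by omega : β ≠ 0)).exists_pos_nat_one_sub_lt_fract_add_mul θ hθ0
  refine ⟨i, hi, ?_⟩
  have h := floor_lt_floor_add_of_one_sub_lt_fract hfract
  convert h using 3 <;> push_cast <;> ring

theorem stmt_18 (n : ℕ) (hn : 2 ≤ n)
    (θ : Fin (n - 1) → ℝ) (hirr : ∀ i, Irrational (θ i))
    (hθ : ∀ i, 0 < θ i ∧ θ i < 1)
    (β : ℕ) (hβ : 1 ≤ β)
    (μ : ℕ → ℤ)
    (hμ : ∀ k : ℕ, μ k = (∑ i, 2 * ⌊(k : ℝ) * θ i⌋) + (n : ℤ) - 1) :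
    (¬ ∀ i : ℕ, 1 ≤ i → μ (β * i + 1) = μ (β * i + 2)) ∧
      ∃ i : ℕ, 1 ≤ i ∧
        (∑ t, ⌊((β * i + 1 : ℕ) : ℝ) * θ t⌋) + 1 ≤ ∑ t, ⌊((β * i + 2 : ℕ) : ℝ) * θ t⌋ := by
  let t₀ : Fin (n - 1) := ⟨0, by omega⟩
  obtain ⟨i, hi, hjump⟩ := (hirr t₀).exists_floor_lt_floor_progression (hθ t₀).1 hβ
  have hsum : (∑ t, ⌊((β * i + 1 : ℕ) : ℝ) * θ t⌋) < ∑ t, ⌊((β * i + 2 : ℕ) : ℝ) * θ t⌋ := by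
    refine Finset.sum_lt_sum (fun t _ ↦ floor_le_floor ?_) ⟨t₀, Finset.mem_univ _, hjump⟩
    gcongr
    · exact (hθ t).1.le
    · omega
  refine ⟨fun h ↦ ?_, i, hi, hsum⟩
  have hμeq := h i hi
  rw [hμ, hμ, ← Finset.mul_sum, ← Finset.mul_sum] at hμeq
  omega
end
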